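/- arXiv:2003.12785 — 4 statements merged into one kernel-verified Lean document; each statement's English description precedes it below -/
import Mathlib

section
/- Let G be a finite group, A ⊆ G a subset, and ρ a nontrivial irreducible unitary representation of G of dimension d_ρ ≥ d_min, where d_min is the minimal dimension of a nontrivial irreducible representation of G. Then the operator norm of F(A)(ρ) = Σ_{a∈A} ρ(a) satisfies ‖F(A)(ρ)‖_op ≤ (|A|·|G|/d_min)^{1/2}. -/
/-!
Schur's lemma makes `∑ g, ρ g * E * ρ g⁻¹` a scalar matrix, which yields the orthogonality
relations `∑ g, ρ g i k * conj (ρ g j l) = (|G| / d_ρ) δᵢⱼ δₖₗ`. Hence the rescaled matrix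
coefficients `√(d_ρ / |G|) · conj (ρ · i k)` are orthonormal in `ℓ²(G)`, and Bessel's inequality
applied to the indicator of `A` gives `d_ρ ‖F(A)(ρ)‖²_HS ≤ |G| |A|`. The operator norm is bounded
by the Hilbert–Schmidt (Frobenius) norm, and `d_min ≤ d_ρ`.
-/

open Matrix

open scoped Matrix.Norms.Frobenius ComplexConjugate

namespace Matrix

theorem frobenius_norm_sq_eq {m n α : Type*} [Fintype m] [Fintype n] [SeminormedAddCommGroup α]
    (M : Matrix m n α) : ‖M‖ ^ 2 = ∑ i, ∑ j, ‖M i j‖ ^ 2 := by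
  change ‖WithLp.toLp 2 fun i => WithLp.toLp 2 (M i)‖ ^ 2 = _
  simp [PiLp.norm_sq_eq_of_L2]

theorem norm_toEuclideanLin_le_frobenius {m n 𝕜 : Type*} [Fintype m] [Fintype n] [DecidableEq n]
    [RCLike 𝕜] (M : Matrix m n 𝕜) (v : EuclideanSpace 𝕜 n) :
    ‖toEuclideanLin M v‖ ≤ ‖M‖ * ‖v‖ := by
  simpa [← replicateCol_mulVec, toLpLin_apply] using
    frobenius_norm_mul M (replicateCol Unit v.ofLp)

theorem trace_single {ι α : Type*} [Fintype ι] [DecidableEq ι] [AddCommMonoid α] (k l : ι)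
    (c : α) : (single k l c).trace = if k = l then c else 0 := by
  split_ifs with h
  · subst h
    exact trace_single_eq_same _ _
  · exact trace_single_eq_of_ne _ _ _ h

theorem mul_single_one_mul_apply {ι κ ν α : Type*} [Fintype ι] [DecidableEq ι] [Fintype κ]
    [DecidableEq κ] [Semiring α] (M : Matrix ν ι α) (N : Matrix κ ν α) (i j : ν) (k : ι) (l : κ) :
    (M * single k l (1 : α) * N) i j = M i k * N l j := by
  rw [Matrix.mul_assoc, mul_apply, Finset.sum_eq_single k]
  all_goals simp_all

end Matrix

def IsIrreducibleMatrixRep {G : Type*} [Monoid G] {n : ℕ} (ρ : G →* Matrix (Fin n) (Fin n) ℂ) :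
    Prop :=
  ∀ W : Submodule ℂ (Fin n → ℂ), (∀ g : G, ∀ v ∈ W, ρ g *ᵥ v ∈ W) → W = ⊥ ∨ W = ⊤

section Schur

variable {G : Type*} {n : ℕ}

theorem IsIrreducibleMatrixRep.exists_eq_smul_one_of_commute [Monoid G]
    {ρ : G →* Matrix (Fin n) (Fin n) ℂ} (hirr : IsIrreducibleMatrixRep ρ)
    {T : Matrix (Fin n) (Fin n) ℂ} (hT : ∀ g, Commute (ρ g) T) : ∃ c : ℂ, T = c • 1 := by
  cases isEmpty_or_nonempty (Fin n)
  · exact ⟨0, Subsingleton.elim _ _⟩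
  obtain ⟨c, hc⟩ := Module.End.exists_eigenvalue (toLin' T)
  have hinv : ∀ g : G, ∀ v ∈ Module.End.eigenspace (toLin' T) c,
      ρ g *ᵥ v ∈ Module.End.eigenspace (toLin' T) c := by
    intro g v hv
    rw [Module.End.mem_eigenspace_iff, toLin'_apply] at hv ⊢
    rw [mulVec_mulVec, ← (hT g).eq, ← mulVec_mulVec, hv, mulVec_smul]
  refine ⟨c, ext_iff_mulVec.mpr fun v => ?_⟩
  have hv : v ∈ Module.End.eigenspace (toLin' T) c :=
    (hirr _ hinv).resolve_left hc ▸ Submodule.mem_top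
  rw [Module.End.mem_eigenspace_iff, toLin'_apply] at hv
  rw [hv, smul_mulVec, one_mulVec]

variable [Group G] [Fintype G]

theorem commute_sum_conj (ρ : G →* Matrix (Fin n) (Fin n) ℂ) (E : Matrix (Fin n) (Fin n) ℂ)
    (h : G) : Commute (ρ h) (∑ g, ρ g * E * ρ g⁻¹) := by
  have hshift : ∀ g, ρ h * (ρ g * E * ρ g⁻¹) = ρ (h * g) * E * ρ (h * g)⁻¹ * ρ h := by
    intro g
    rw [mul_assoc _ (ρ (h * g)⁻¹), ← map_mul, _root_.mul_inv_rev, inv_mul_cancel_right, map_mul]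
    simp only [mul_assoc]
  rw [Commute, SemiconjBy, Finset.mul_sum, Finset.sum_mul]
  simp only [hshift]
  exact Fintype.sum_equiv (Equiv.mulLeft h) _ (fun g => ρ g * E * ρ g⁻¹ * ρ h) fun g => rfl

theorem IsIrreducibleMatrixRep.sum_conj_eq_smul_one {ρ : G →* Matrix (Fin n) (Fin n) ℂ}
    (hirr : IsIrreducibleMatrixRep ρ) (E : Matrix (Fin n) (Fin n) ℂ) :
    ∑ g, ρ g * E * ρ g⁻¹ = (Fintype.card G * E.trace / n : ℂ) • 1 := by
  obtain ⟨c, hc⟩ := hirr.exists_eq_smul_one_of_commute (commute_sum_conj ρ E)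
  rcases Nat.eq_zero_or_pos n with rfl | hn
  · exact Subsingleton.elim _ _
  have htrace : c * n = Fintype.card G * E.trace := by
    have hconj : ∀ g, (ρ g * E * ρ g⁻¹).trace = E.trace := fun g => by
      rw [trace_mul_comm, ← mul_assoc, ← map_mul, inv_mul_cancel, map_one, one_mul]
    simpa [hconj, trace_sum, mul_comm] using congrArg trace hc.symm
  rw [hc, ← htrace, mul_div_cancel_right₀ _ (by exact_mod_cast hn.ne')]

theorem IsIrreducibleMatrixRep.sum_mul_conj_apply {ρ : G →* Matrix (Fin n) (Fin n) ℂ}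
    (hunit : ∀ g : G, (ρ g)ᴴ * ρ g = 1) (hirr : IsIrreducibleMatrixRep ρ) (i j k l : Fin n) :
    ∑ g, ρ g i k * conj (ρ g j l) = if i = j ∧ k = l then (Fintype.card G / n : ℂ) else 0 := by
  have hinv : ∀ g, ρ g⁻¹ = (ρ g)ᴴ := fun g =>
    (left_inv_eq_right_inv (hunit g) (by rw [← map_mul, mul_inv_cancel, map_one])).symm
  have hentry := congrFun (congrFun (hirr.sum_conj_eq_smul_one (single k l 1)) i) j
  simp only [Matrix.sum_apply, mul_single_one_mul_apply, hinv, conjTranspose_apply,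
    Matrix.smul_apply, one_apply, smul_eq_mul, trace_single] at hentry
  simp only [starRingEnd_apply, hentry]
  by_cases hij : i = j <;> by_cases hkl : k = l <;> simp [hij, hkl]

end Schur

section MatrixCoefficients

variable {G : Type*} [Group G] [Fintype G] {n : ℕ} (ρ : G →* Matrix (Fin n) (Fin n) ℂ)

noncomputable def matrixCoeffVec (p : Fin n × Fin n) : EuclideanSpace ℂ G :=
  WithLp.toLp 2 fun g => (√(n / Fintype.card G : ℝ) : ℂ) * conj (ρ g p.1 p.2)

theorem orthonormal_matrixCoeffVec (hunit : ∀ g : G, (ρ g)ᴴ * ρ g = 1)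
    (hirr : IsIrreducibleMatrixRep ρ) : Orthonormal ℂ (matrixCoeffVec ρ) := by
  rw [orthonormal_iff_ite]
  rintro ⟨i, k⟩ ⟨j, l⟩
  have hn : (n : ℂ) ≠ 0 := by exact_mod_cast i.pos.ne'
  have hscale : ((√(n / Fintype.card G : ℝ) : ℂ)) ^ 2 = n / Fintype.card G := by
    rw [← Complex.ofReal_pow, Real.sq_sqrt (by positivity)]
    push_cast
    rfl
  calc inner ℂ (matrixCoeffVec ρ (i, k)) (matrixCoeffVec ρ (j, l))
      = (n / Fintype.card G : ℂ) * ∑ g, ρ g i k * conj (ρ g j l) := by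
        rw [PiLp.inner_apply, Finset.mul_sum, ← hscale]
        refine Finset.sum_congr rfl fun g _ => ?_
        simp only [matrixCoeffVec, RCLike.inner_apply, map_mul, Complex.conj_ofReal,
          Complex.conj_conj]
        ring
    _ = if (i, k) = (j, l) then 1 else 0 := by
        simp only [hirr.sum_mul_conj_apply hunit, Prod.mk.injEq]
        split_ifs
        · field_simp
        · rw [mul_zero]

theorem inner_matrixCoeffVec (f : EuclideanSpace ℂ G) (p : Fin n × Fin n) :
    inner ℂ (matrixCoeffVec ρ p) f =
      (√(n / Fintype.card G : ℝ) : ℂ) * (∑ g, f g • ρ g) p.1 p.2 := by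
  rw [PiLp.inner_apply, Matrix.sum_apply, Finset.mul_sum]
  refine Finset.sum_congr rfl fun g _ => ?_
  simp only [matrixCoeffVec, RCLike.inner_apply, map_mul, Complex.conj_ofReal, Complex.conj_conj,
    Matrix.smul_apply, smul_eq_mul]
  ring

theorem natCast_mul_norm_sum_smul_sq_le (hunit : ∀ g : G, (ρ g)ᴴ * ρ g = 1)
    (hirr : IsIrreducibleMatrixRep ρ) (f : EuclideanSpace ℂ G) :
    n * ‖∑ g, f g • ρ g‖ ^ 2 ≤ Fintype.card G * ‖f‖ ^ 2 := by
  set M := ∑ g, f g • ρ g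
  have hbessel := (orthonormal_matrixCoeffVec ρ hunit hirr).sum_inner_products_le f
    (s := Finset.univ)
  have hcoeff : ∀ p : Fin n × Fin n, ‖inner ℂ (matrixCoeffVec ρ p) f‖ ^ 2 =
      n / Fintype.card G * ‖M p.1 p.2‖ ^ 2 := fun p => by
    rw [inner_matrixCoeffVec, norm_mul, mul_pow, Complex.norm_real, Real.norm_eq_abs, sq_abs,
      Real.sq_sqrt (by positivity)]
  rw [Finset.sum_congr rfl fun p _ => hcoeff p, ← Finset.mul_sum,
    Fintype.sum_prod_type' fun i j => ‖M i j‖ ^ 2, ← frobenius_norm_sq_eq, div_mul_eq_mul_div,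
    div_le_iff₀ (by exact_mod_cast Fintype.card_pos)] at hbessel
  linarith

theorem natCast_mul_norm_sum_finset_sq_le (hunit : ∀ g : G, (ρ g)ᴴ * ρ g = 1)
    (hirr : IsIrreducibleMatrixRep ρ) (A : Finset G) :
    n * ‖∑ a ∈ A, ρ a‖ ^ 2 ≤ Fintype.card G * A.card := by
  classical
  let f : EuclideanSpace ℂ G := WithLp.toLp 2 fun g => if g ∈ A then 1 else 0
  have hsum : ∑ g, f g • ρ g = ∑ a ∈ A, ρ a := by
    simp [f, ite_smul, Finset.sum_ite_mem]
  have hnorm : ‖f‖ ^ 2 = A.card := by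
    simp [EuclideanSpace.norm_sq_eq, f, apply_ite]
  simpa [hsum, hnorm] using natCast_mul_norm_sum_smul_sq_le ρ hunit hirr f

end MatrixCoefficients

theorem opNorm_fourier_le_general {G : Type*} [Group G] [Fintype G]
    (A : Finset G) (dmin : ℕ) (hdminpos : 0 < dmin)
    (hdmin : ∀ (m : ℕ) (π : G →* Matrix (Fin m) (Fin m) ℂ),
      (∀ g : G, (π g)ᴴ * π g = 1) →
      (∀ W : Submodule ℂ (Fin m → ℂ),
        (∀ g : G, ∀ v ∈ W, (π g).mulVec v ∈ W) → W = ⊥ ∨ W = ⊤) →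
      (∃ g : G, π g ≠ 1) → dmin ≤ m)
    (n : ℕ) (ρ : G →* Matrix (Fin n) (Fin n) ℂ)
    (hunit : ∀ g : G, (ρ g)ᴴ * ρ g = 1)
    (hirr : ∀ W : Submodule ℂ (Fin n → ℂ),
      (∀ g : G, ∀ v ∈ W, (ρ g).mulVec v ∈ W) → W = ⊥ ∨ W = ⊤)
    (hnontriv : ∃ g : G, ρ g ≠ 1) :
    ∀ v : EuclideanSpace ℂ (Fin n),
      ‖Matrix.toEuclideanLin (∑ a ∈ A, ρ a) v‖ ≤
        Real.sqrt (A.card * Fintype.card G / dmin) * ‖v‖ := by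
  intro v
  have hdn : (dmin : ℝ) ≤ n := by exact_mod_cast hdmin n ρ hunit hirr hnontriv
  have hfrob : ‖∑ a ∈ A, ρ a‖ ≤ √(A.card * Fintype.card G / dmin) := by
    rw [Real.le_sqrt (norm_nonneg _) (by positivity), le_div_iff₀ (by exact_mod_cast hdminpos)]
    calc ‖∑ a ∈ A, ρ a‖ ^ 2 * (dmin : ℝ) ≤ n * ‖∑ a ∈ A, ρ a‖ ^ 2 := by
          rw [mul_comm]
          gcongr
      _ ≤ (Fintype.card G * A.card : ℝ) := natCast_mul_norm_sum_finset_sq_le ρ hunit hirr A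
      _ = A.card * Fintype.card G := mul_comm _ _
  calc ‖toEuclideanLin (∑ a ∈ A, ρ a) v‖ ≤ ‖∑ a ∈ A, ρ a‖ * ‖v‖ :=
        norm_toEuclideanLin_le_frobenius _ v
    _ ≤ √(A.card * Fintype.card G / dmin) * ‖v‖ := by gcongr

/-- Operator norm bound for the Fourier transform of a set at a nontrivial
irreducible unitary representation: `‖F(A)(ρ)‖_op ≤ √(|A|·|G|/d_min)`, where
`d_min` is the minimal dimension of a nontrivial irreducible unitary
representation of `G`. -/
theorem opNorm_fourier_le {G : Type*} [Group G] [Fintype G] [DecidableEq G]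
    (A : Finset G) (dmin : ℕ) (hdminpos : 0 < dmin)
    (hdmin : ∀ (m : ℕ) (π : G →* Matrix (Fin m) (Fin m) ℂ),
      (∀ g : G, (π g)ᴴ * π g = 1) →
      (∀ W : Submodule ℂ (Fin m → ℂ),
        (∀ g : G, ∀ v ∈ W, (π g).mulVec v ∈ W) → W = ⊥ ∨ W = ⊤) →
      (∃ g : G, π g ≠ 1) → dmin ≤ m)
    (n : ℕ) (ρ : G →* Matrix (Fin n) (Fin n) ℂ)
    (hunit : ∀ g : G, (ρ g)ᴴ * ρ g = 1)
    (hirr : ∀ W : Submodule ℂ (Fin n → ℂ),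
      (∀ g : G, ∀ v ∈ W, (ρ g).mulVec v ∈ W) → W = ⊥ ∨ W = ⊤)
    (hnontriv : ∃ g : G, ρ g ≠ 1) :
    ∀ v : EuclideanSpace ℂ (Fin n),
      ‖Matrix.toEuclideanLin (∑ a ∈ A, ρ a) v‖ ≤
        Real.sqrt (A.card * Fintype.card G / dmin) * ‖v‖ :=
  opNorm_fourier_le_general A dmin hdminpos hdmin n ρ hunit hirr hnontriv
end

section
/- Let G be a finite group, P ≤ G a subgroup, and A ⊆ G a finite set. Suppose that for every g ∉ P and every x ∈ G one has r_{PgP}(x) ≤ 2|P|/q (where r_{PgP}(x) counts pairs (p₁,p₂) ∈ P×P with p₁gp₂ = x, and q ≥ 1 is a real parameter). Then for any g ∉ P, with A_g := A ∩ gP, one has E(P, A_g) ≤ 2|P|²|A_g|/q, where E(P,A_g) = Σ_x r_{PA_g}(x)². -/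
/-!
Every fibre of `P × A_g → G, (p, a) ↦ p a` is no larger than the corresponding fibre of
`P × P → G, (p₁, p₂) ↦ p₁ g p₂`, since `A_g ⊆ gP`; so every `r_{P A_g}(x) ≤ 2|P|/q`. Then
`E(P, A_g) = Σ r² ≤ (max r) · Σ r = (max r) · |P| |A_g|`.
-/

open Finset
open scoped Pointwise

lemma Finset.sum_sq_le_mul_sum_of_le {ι R : Type*} [CommSemiring R] [PartialOrder R]
    [IsOrderedRing R] (s : Finset ι) {f : ι → R} {M : R} (hf₀ : ∀ i ∈ s, 0 ≤ f i)
    (hfM : ∀ i ∈ s, f i ≤ M) : ∑ i ∈ s, f i ^ 2 ≤ M * ∑ i ∈ s, f i := by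
  rw [mul_sum]
  exact sum_le_sum fun i hi => by
    rw [sq]; exact mul_le_mul_of_nonneg_right (hfM i hi) (hf₀ i hi)

section RepCount

variable {G : Type*} [Group G] [DecidableEq G]

/-- The paper's `r_{XY}(x)`. -/
def repCount (X Y : Finset G) (x : G) : ℕ := #{pr ∈ X ×ˢ Y | pr.1 * pr.2 = x}

lemma repCount_mono_right {X Y Y' : Finset G} (h : Y ⊆ Y') (x : G) :
    repCount X Y x ≤ repCount X Y' x :=
  card_le_card (filter_subset_filter _ (product_subset_product_right h))

lemma repCount_smul_right (X Y : Finset G) (g x : G) :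
    repCount X (g • Y) x = #{pr ∈ X ×ˢ Y | pr.1 * g * pr.2 = x} := by
  refine card_nbij' (fun pr => (pr.1, g⁻¹ * pr.2)) (fun pr => (pr.1, g * pr.2)) ?_ ?_ ?_ ?_
  · rintro ⟨a, b⟩ hab
    simp only [coe_filter, Set.mem_ofPred_eq, mem_product] at hab ⊢
    obtain ⟨⟨ha, hb⟩, rfl⟩ := hab
    refine ⟨⟨ha, ?_⟩, by group⟩
    rwa [← smul_eq_mul, inv_smul_mem_iff]
  · rintro ⟨a, b⟩ hab
    simp only [coe_filter, Set.mem_ofPred_eq, mem_product] at hab ⊢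
    obtain ⟨⟨ha, hb⟩, rfl⟩ := hab
    exact ⟨⟨ha, smul_mem_smul_finset hb⟩, by group⟩
  · rintro ⟨a, b⟩ -
    simp
  · rintro ⟨a, b⟩ -
    simp

lemma sum_repCount [Fintype G] (X Y : Finset G) : ∑ x, repCount X Y x = #X * #Y := by
  rw [← card_product]
  exact (card_eq_sum_card_fiberwise fun _ _ => mem_univ _).symm

end RepCount

theorem energy_with_coset_bound_general {G : Type*} [Group G] [Fintype G] [DecidableEq G]
    (P : Subgroup G) [DecidablePred (· ∈ P)] (A : Finset G) (q : ℝ)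
    (Pf : Finset G) (hPf : Pf = Finset.univ.filter (· ∈ P))
    (hfib : ∀ g : G, g ∉ P → ∀ x : G,
      (((Pf ×ˢ Pf).filter (fun pr => pr.1 * g * pr.2 = x)).card : ℝ) ≤
        2 * Pf.card / q) :
    ∀ g : G, g ∉ P →
      ((∑ x : G, (((Pf ×ˢ (A.filter (fun a => g⁻¹ * a ∈ P))).filter
          (fun pr => pr.1 * pr.2 = x)).card) ^ 2 : ℝ)) ≤
        2 * Pf.card ^ 2 * (A.filter (fun a => g⁻¹ * a ∈ P)).card / q := by
  intro g hg
  set Ag := A.filter (fun a => g⁻¹ * a ∈ P)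
  have hAg : Ag ⊆ g • Pf := fun a ha => by
    rw [← inv_smul_mem_iff, hPf, mem_filter]
    exact ⟨mem_univ _, (mem_filter.1 ha).2⟩
  have hfibre (x : G) : (repCount Pf Ag x : ℝ) ≤ 2 * #Pf / q := by
    refine le_trans ?_ (hfib g hg x)
    rw [← repCount_smul_right]
    exact_mod_cast repCount_mono_right hAg x
  calc ∑ x, (repCount Pf Ag x : ℝ) ^ 2
      ≤ 2 * #Pf / q * ∑ x, (repCount Pf Ag x : ℝ) :=
        sum_sq_le_mul_sum_of_le _ (fun _ _ => Nat.cast_nonneg _) fun x _ => hfibre x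
    _ = 2 * #Pf ^ 2 * #Ag / q := by
        rw [← Nat.cast_sum, sum_repCount]; push_cast; ring

theorem energy_with_coset_bound {G : Type*} [Group G] [Fintype G] [DecidableEq G]
    (P : Subgroup G) [DecidablePred (· ∈ P)] (A : Finset G) (q : ℝ) (hq : 1 ≤ q)
    (Pf : Finset G) (hPf : Pf = Finset.univ.filter (· ∈ P))
    (hfib : ∀ g : G, g ∉ P → ∀ x : G,
      (((Pf ×ˢ Pf).filter (fun pr => pr.1 * g * pr.2 = x)).card : ℝ) ≤
        2 * Pf.card / q) :
    ∀ g : G, g ∉ P →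
      ((∑ x : G, (((Pf ×ˢ (A.filter (fun a => g⁻¹ * a ∈ P))).filter
          (fun pr => pr.1 * pr.2 = x)).card) ^ 2 : ℝ)) ≤
        2 * Pf.card ^ 2 * (A.filter (fun a => g⁻¹ * a ∈ P)).card / q :=
  energy_with_coset_bound_general P A q Pf hPf hfib
end

section
/- Let G be a finite group, P ≤ G a subgroup, A ⊆ G a finite set. Then E(A⁻¹, P) ≤ |P|²·|A ∩ P| + Δ·|P|·|A|, where Δ = max_{g ∉ P} |A ∩ gP| and E(A⁻¹,P) = Σ_{x∈G} r_{AP}(x)² with r_{AP}(x) = |{(a,p) ∈ A×P : ap = x}|. -/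
theorem energy_A_P_bound {G : Type*} [Group G] [Fintype G] [DecidableEq G]
    (P : Subgroup G) [DecidablePred (· ∈ P)] (A : Finset G)
    (Pf : Finset G) (hPf : Pf = Finset.univ.filter (· ∈ P))
    (Δ : ℕ)
    (hΔ : Δ = (Finset.univ.filter (fun g : G => g ∉ P)).sup
      (fun g => (A.filter (fun a => g⁻¹ * a ∈ P)).card)) :
    ∑ x : G, (((A ×ˢ Pf).filter (fun pr => pr.1 * pr.2 = x)).card) ^ 2 ≤
      Pf.card ^ 2 * (A.filter (· ∈ P)).card + Δ * Pf.card * A.card := by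
  set f : G → ℕ := fun x => ((A ×ˢ Pf).filter (fun pr => pr.1 * pr.2 = x)).card with hf
  have hmemPf : ∀ y : G, y ∈ Pf ↔ y ∈ P := by
    intro y; rw [hPf, Finset.mem_filter]; simp
  have hfx : ∀ x : G, f x = (A.filter (fun a => x⁻¹ * a ∈ P)).card := by
    intro x
    apply Finset.card_bij (fun pr _ => pr.1)
    · intro pr hpr
      rw [Finset.mem_filter, Finset.mem_product] at hpr
      obtain ⟨⟨h1, h2⟩, h3⟩ := hpr
      rw [Finset.mem_filter]
      refine ⟨h1, ?_⟩
      have hx : x⁻¹ * pr.1 = pr.2⁻¹ := by rw [← h3]; group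
      rw [hx]
      exact inv_mem ((hmemPf pr.2).mp h2)
    · intro pr hpr qr hqr h
      rw [Finset.mem_filter] at hpr hqr
      have : pr.2 = qr.2 := by
        have h1 := hpr.2; have h2 := hqr.2
        have : pr.1 * pr.2 = pr.1 * qr.2 := by rw [h1, h, h2]
        exact mul_left_cancel this
      exact Prod.ext h this
    · intro a ha
      rw [Finset.mem_filter] at ha
      refine ⟨(a, a⁻¹ * x), ?_, rfl⟩
      rw [Finset.mem_filter, Finset.mem_product]
      refine ⟨⟨ha.1, ?_⟩, by group⟩
      rw [hmemPf]
      have : a⁻¹ * x = (x⁻¹ * a)⁻¹ := by group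
      rw [this]
      exact inv_mem ha.2
  have hsum : ∑ x : G, f x = A.card * Pf.card := by
    rw [← Finset.card_product]
    exact (Finset.card_eq_sum_card_fiberwise (f := fun pr : G × G => pr.1 * pr.2)
      (by intro pr _; exact Finset.mem_univ _)).symm
  have hsplit : ∑ x : G, f x ^ 2 =
      ∑ x ∈ Finset.univ.filter (· ∈ P), f x ^ 2 +
      ∑ x ∈ Finset.univ.filter (fun x => ¬ x ∈ P), f x ^ 2 :=
    (Finset.sum_filter_add_sum_filter_not _ _ _).symm
  set c := (A.filter (· ∈ P)).card with hc
  have hcle : c ≤ Pf.card := by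
    apply Finset.card_le_card
    intro a ha
    rw [Finset.mem_filter] at ha
    exact (hmemPf a).mpr ha.2
  have h1 : ∑ x ∈ Finset.univ.filter (· ∈ P), f x ^ 2 ≤ Pf.card ^ 2 * c := by
    have : ∀ x ∈ Finset.univ.filter (· ∈ P), f x ^ 2 = c ^ 2 := by
      intro x hx
      rw [Finset.mem_filter] at hx
      congr 1
      rw [hfx x, hc]
      congr 1
      apply Finset.filter_congr
      intro a _
      constructor
      · intro h
        have := mul_mem hx.2 h
        simpa using this
      · intro h
        exact mul_mem (inv_mem hx.2) h
    rw [Finset.sum_congr rfl this, Finset.sum_const, smul_eq_mul]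
    have hcard : (Finset.univ.filter (· ∈ P)).card = Pf.card := by rw [hPf]
    rw [hcard]
    calc Pf.card * c ^ 2 = Pf.card * c * c := by ring
      _ ≤ Pf.card * Pf.card * c := by
          apply Nat.mul_le_mul_right
          exact Nat.mul_le_mul_left _ hcle
      _ = Pf.card ^ 2 * c := by ring
  have h2 : ∑ x ∈ Finset.univ.filter (fun x => ¬ x ∈ P), f x ^ 2 ≤
      Δ * Pf.card * A.card := by
    have hle : ∀ x ∈ Finset.univ.filter (fun x => ¬ x ∈ P), f x ^ 2 ≤ Δ * f x := by
      intro x hx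
      rw [Finset.mem_filter] at hx
      have hfΔ : f x ≤ Δ := by
        rw [hfx x, hΔ]
        exact Finset.le_sup (f := fun g => (A.filter (fun a => g⁻¹ * a ∈ P)).card) (Finset.mem_filter.mpr ⟨Finset.mem_univ x, hx.2⟩)
      calc f x ^ 2 = f x * f x := sq (f x) ▸ by ring
        _ ≤ Δ * f x := Nat.mul_le_mul_right _ hfΔ
    calc ∑ x ∈ Finset.univ.filter (fun x => ¬ x ∈ P), f x ^ 2
        ≤ ∑ x ∈ Finset.univ.filter (fun x => ¬ x ∈ P), Δ * f x :=
          Finset.sum_le_sum hle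
      _ = Δ * ∑ x ∈ Finset.univ.filter (fun x => ¬ x ∈ P), f x := by
          rw [Finset.mul_sum]
      _ ≤ Δ * ∑ x : G, f x := by
          apply Nat.mul_le_mul_left
          exact Finset.sum_le_sum_of_subset (Finset.filter_subset _ _)
      _ = Δ * (A.card * Pf.card) := by rw [hsum]
      _ = Δ * Pf.card * A.card := by ring
  calc ∑ x : G, f x ^ 2 = _ := hsplit
    _ ≤ Pf.card ^ 2 * c + Δ * Pf.card * A.card := Nat.add_le_add h1 h2
end

section
/- Let p be prime and let Λ be a set of matrices (p_{s−1}, p_s; q_{s−1}, q_s) ∈ SL₂(ℤ) arising as products (0,1;1,b₁)⋯(0,1;1,b_s) with all entries strictly less than √(p−1). Let B̄ ⊆ SL₂(F_p) be the subgroup of upper triangular matrices, and identify matrices in Λ with their reductions mod p. Then for any two M, M' ∈ Λ, if M·M'⁻¹ reduces mod p to an element of B̄, then M and M' have equal bottom rows (q_{s−1}, q_s) = (q'_{t−1}, q'_t). -/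
open Matrix

lemma cont_nonneg (l : List ℤ) (hl : ∀ b ∈ l, 1 ≤ b) :
    ∀ i j, 0 ≤ (l.map (fun b => (!![0, 1; 1, b] : Matrix (Fin 2) (Fin 2) ℤ))).prod i j := by
  induction l with
  | nil =>
    intro i j
    by_cases h : i = j <;> simp [Matrix.one_apply, h]
  | cons b t ih =>
    intro i j
    have hb : (1:ℤ) ≤ b := hl b (by simp)
    have ht := ih (fun x hx => hl x (by simp [hx]))
    simp only [List.map_cons, List.prod_cons]
    rw [Matrix.mul_apply, Fin.sum_univ_two]
    fin_cases i <;> simp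
    · exact ht 1 j
    · exact add_nonneg (ht 0 j) (mul_nonneg (by linarith) (ht 1 j))

lemma cont_det (l : List ℤ) :
    IsUnit ((l.map (fun b => (!![0, 1; 1, b] : Matrix (Fin 2) (Fin 2) ℤ))).prod).det := by
  induction l with
  | nil => simp
  | cons b t ih =>
    simp only [List.map_cons, List.prod_cons, Matrix.det_mul]
    refine (IsUnit.mul ?_ ih)
    simp [Matrix.det_fin_two_of]

lemma coprime_row (M : Matrix (Fin 2) (Fin 2) ℤ) (h : IsUnit M.det) :
    IsCoprime (M 1 0) (M 1 1) := by
  rw [Matrix.det_fin_two] at h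
  rcases Int.isUnit_iff.mp h with h | h
  · exact ⟨-(M 0 1), M 0 0, by linarith⟩
  · exact ⟨M 0 1, -(M 0 0), by linarith⟩

/-- If two continuant matrices with all entries `< √(p-1)` become, after reduction
mod `p`, congruent modulo the upper triangular Borel subgroup (i.e. the lower-left
entry of `M·M'⁻¹` vanishes mod `p`; since `det M' = ±1` this is expressed via the
adjugate), then they have equal bottom rows. -/
theorem small_continuant_borel_eq_rows (p : ℕ) (hp : p.Prime)
    (M M' : Matrix (Fin 2) (Fin 2) ℤ)
    (hM : ∃ l : List ℤ, (∀ b ∈ l, 1 ≤ b) ∧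
      (l.map (fun b => (!![0, 1; 1, b] : Matrix (Fin 2) (Fin 2) ℤ))).prod = M)
    (hM' : ∃ l : List ℤ, (∀ b ∈ l, 1 ≤ b) ∧
      (l.map (fun b => (!![0, 1; 1, b] : Matrix (Fin 2) (Fin 2) ℤ))).prod = M')
    (hMsmall : ∀ i j, (M i j : ℝ) < Real.sqrt (p - 1))
    (hM'small : ∀ i j, (M' i j : ℝ) < Real.sqrt (p - 1))
    (hBorel : (p : ℤ) ∣ (M * M'.adjugate) 1 0) :
    M 1 0 = M' 1 0 ∧ M 1 1 = M' 1 1 := by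
  obtain ⟨l, hl, rfl⟩ := hM
  obtain ⟨l', hl', rfl⟩ := hM'
  set M := (l.map (fun b => (!![0, 1; 1, b] : Matrix (Fin 2) (Fin 2) ℤ))).prod with hMdef
  set M' := (l'.map (fun b => (!![0, 1; 1, b] : Matrix (Fin 2) (Fin 2) ℤ))).prod with hM'def
  have hMn : ∀ i j, 0 ≤ M i j := cont_nonneg l hl
  have hM'n : ∀ i j, 0 ≤ M' i j := cont_nonneg l' hl'
  have hcop : IsCoprime (M 1 0) (M 1 1) := coprime_row M (cont_det l)
  have hcop' : IsCoprime (M' 1 0) (M' 1 1) := coprime_row M' (cont_det l')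
  -- the Borel entry
  have hentry : (M * M'.adjugate) 1 0 = M 1 0 * M' 1 1 - M 1 1 * M' 1 0 := by
    rw [Matrix.adjugate_fin_two, Matrix.mul_apply, Fin.sum_univ_two]
    simp; ring
  rw [hentry] at hBorel
  -- bound: each product < p - 1
  have hppos : (1:ℝ) ≤ (p : ℝ) := by exact_mod_cast hp.one_lt.le
  have hsq : Real.sqrt ((p:ℝ) - 1) * Real.sqrt ((p:ℝ) - 1) = (p:ℝ) - 1 :=
    Real.mul_self_sqrt (by linarith)
  have hbound : ∀ (A B : Matrix (Fin 2) (Fin 2) ℤ), (∀ i j, 0 ≤ A i j) →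
      (∀ i j, 0 ≤ B i j) → (∀ i j, (A i j : ℝ) < Real.sqrt (p - 1)) →
      (∀ i j, (B i j : ℝ) < Real.sqrt (p - 1)) →
      ∀ i j k m, (A i j * B k m : ℝ) < (p:ℝ) - 1 := by
    intro A B hA hB hAs hBs i j k m
    have h1 : (0:ℝ) ≤ (A i j : ℝ) := by exact_mod_cast hA i j
    have h2 : (0:ℝ) ≤ (B k m : ℝ) := by exact_mod_cast hB k m
    calc (A i j * B k m : ℝ) < Real.sqrt ((p:ℝ)-1) * Real.sqrt ((p:ℝ)-1) := by
          exact mul_lt_mul' (hAs i j).le (hBs k m) h2 ((h1.trans_lt (hAs i j)))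
      _ = (p:ℝ) - 1 := hsq
  have hb1 : ((M 1 0 * M' 1 1 : ℤ) : ℝ) < (p:ℝ) - 1 := by
    exact_mod_cast hbound M M' hMn hM'n hMsmall hM'small 1 0 1 1
  have hb2 : ((M 1 1 * M' 1 0 : ℤ) : ℝ) < (p:ℝ) - 1 := by
    exact_mod_cast hbound M M' hMn hM'n hMsmall hM'small 1 1 1 0
  have hz1 : (0:ℤ) ≤ M 1 0 * M' 1 1 := mul_nonneg (hMn 1 0) (hM'n 1 1)
  have hz2 : (0:ℤ) ≤ M 1 1 * M' 1 0 := mul_nonneg (hMn 1 1) (hM'n 1 0)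
  have habs : |M 1 0 * M' 1 1 - M 1 1 * M' 1 0| < (p:ℤ) := by
    rw [abs_lt]
    constructor
    · have : ((M 1 1 * M' 1 0 : ℤ) : ℝ) < (p:ℝ) := by linarith
      have h' : (M 1 1 * M' 1 0 : ℤ) < (p:ℤ) := by exact_mod_cast this
      linarith
    · have : ((M 1 0 * M' 1 1 : ℤ) : ℝ) < (p:ℝ) := by linarith
      have h' : (M 1 0 * M' 1 1 : ℤ) < (p:ℤ) := by exact_mod_cast this
      linarith
  have heq0 : M 1 0 * M' 1 1 - M 1 1 * M' 1 0 = 0 :=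
    Int.eq_zero_of_abs_lt_dvd hBorel habs
  have hkey : M 1 0 * M' 1 1 = M 1 1 * M' 1 0 := by linarith
  -- coprimality argument
  have hd1 : M 1 0 ∣ M' 1 0 := by
    have : M 1 0 ∣ M 1 1 * M' 1 0 := ⟨M' 1 1, by linarith⟩
    exact hcop.dvd_of_dvd_mul_left this
  have hd2 : M' 1 0 ∣ M 1 0 := by
    have : M' 1 0 ∣ M' 1 1 * M 1 0 := ⟨M 1 1, by linarith⟩
    exact hcop'.dvd_of_dvd_mul_left this
  have hq : M 1 0 = M' 1 0 := Int.dvd_antisymm (hMn 1 0) (hM'n 1 0) hd1 hd2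
  refine ⟨hq, ?_⟩
  by_cases h0 : M 1 0 = 0
  · have h0' : M' 1 0 = 0 := by rw [← hq, h0]
    rw [h0] at hcop
    rw [h0'] at hcop'
    have hu : IsUnit (M 1 1) := (isCoprime_zero_left.mp hcop)
    have hu' : IsUnit (M' 1 1) := (isCoprime_zero_left.mp hcop')
    rcases Int.isUnit_iff.mp hu with h | h <;> rcases Int.isUnit_iff.mp hu' with h' | h'
    · rw [h, h']
    · exfalso; have := hM'n 1 1; omega
    · exfalso; have := hMn 1 1; omega
    · exfalso; have := hMn 1 1; omega
  · have : M 1 0 * M' 1 1 = M 1 0 * M 1 1 := by rw [hkey, hq]; ring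
    exact (mul_left_cancel₀ h0 this).symm
end
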